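/- arXiv:2604.02505 — 2 statements merged into one kernel-verified Lean document; each statement's English description precedes it below -/
import Mathlib

section
/- The gradient of m ↦ η tr(√(mm^T + S)), for a fixed positive definite symmetric matrix S and η > 0, equals η (mm^T + S)^{-1/2} m; moreover this function is convex in m. -/
open Matrix
open scoped Classical

/-- The positive semidefinite square root of a matrix (zero if not PSD). -/
noncomputable def sqrtM {n : ℕ} (A : Matrix (Fin n) (Fin n) ℝ) : Matrix (Fin n) (Fin n) ℝ :=
  if h : A.PosSemidef then
    (h.1.eigenvectorUnitary : Matrix (Fin n) (Fin n) ℝ) *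
      diagonal (RCLike.ofReal ∘ Real.sqrt ∘ h.1.eigenvalues) *
      (star h.1.eigenvectorUnitary : Matrix (Fin n) (Fin n) ℝ)
  else 0

/-- Euclidean norm of a vector. -/
noncomputable def euclNorm {n : ℕ} (v : Fin n → ℝ) : ℝ := Real.sqrt (v ⬝ᵥ v)

/-- The ℓ₂ operator (spectral) norm of a matrix. -/
noncomputable def opNorm {n : ℕ} (A : Matrix (Fin n) (Fin n) ℝ) : ℝ :=
  ⨆ u : {u : Fin n → ℝ // euclNorm u ≤ 1}, euclNorm (A *ᵥ u)


/-!
Write `A_z = z zᵀ + S` and `P_z = (√A_z)⁻¹`. Factoring `A_z = N Nᵀ` and `A_w = M Mᵀ` with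
`N = [z | √S]` and `M = [w | √S]`, the rows of `Y = P_z N` are orthonormal and `M Nᵀ = w zᵀ + S`,
so the trace inequality `tr (M Yᵀ) ≤ tr √(M Mᵀ)` becomes the subgradient inequality
`tr √A_z + ⟪w - z, P_z z⟫ ≤ tr √A_w`. The function is thus a supremum of affine minorants that are
tight at every point, hence convex. In the other direction, `2 tr √B ≤ tr (P_z B) + tr √A_z` for
`B = A_{z+h}` gives `tr √A_{z+h} ≤ tr √A_z + ⟪h, P_z z⟫ + ⟪h, P_z h⟫ / 2`, so the remainder of the
first-order expansion is squeezed between `0` and `O(‖h‖²)`.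

Both trace inequalities are AM–GM in the form `0 ≤ tr ((X - R) (X - R)ᵀ)`, with `R` the fourth
root of `M Mᵀ`, resp. of `A_z`.
-/

section SqrtM

variable {n : ℕ} {A : Matrix (Fin n) (Fin n) ℝ}

open scoped MatrixOrder

lemma sqrtM_eq_cfc (h : A.PosSemidef) : sqrtM A = cfc Real.sqrt A := by
  rw [h.1.cfc_eq, IsHermitian.cfc, sqrtM, dif_pos h, Unitary.conjStarAlgAut_apply]

lemma posSemidef_sqrtM (h : A.PosSemidef) : (sqrtM A).PosSemidef := by
  rw [sqrtM_eq_cfc h]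
  exact nonneg_iff_posSemidef.mp (cfc_nonneg fun x _ => Real.sqrt_nonneg x)

lemma sqrtM_mul_sqrtM (h : A.PosSemidef) : sqrtM A * sqrtM A = A := by
  rw [sqrtM_eq_cfc h, ← cfc_mul Real.sqrt Real.sqrt A]
  conv_rhs => rw [← cfc_id ℝ A]
  exact cfc_congr fun x hx =>
    Real.mul_self_sqrt (spectrum_nonneg_of_nonneg (nonneg_iff_posSemidef.mpr h) hx)

lemma transpose_sqrtM (h : A.PosSemidef) : (sqrtM A)ᵀ = sqrtM A := by
  simpa [IsHermitian, conjTranspose_eq_transpose_of_trivial] using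
    (posSemidef_sqrtM h).isHermitian

lemma posDef_sqrtM (h : A.PosDef) : (sqrtM A).PosDef := by
  refine (posSemidef_sqrtM h.posSemidef).posDef_iff_isUnit.mpr
    (isUnit_of_mul_isUnit_left (y := sqrtM A) ?_)
  rw [sqrtM_mul_sqrtM h.posSemidef]
  exact h.isUnit

lemma isUnit_det_sqrtM (h : A.PosDef) : IsUnit (sqrtM A).det :=
  (isUnit_iff_isUnit_det _).mp (posDef_sqrtM h).isUnit

lemma transpose_inv_sqrtM (h : A.PosSemidef) : ((sqrtM A)⁻¹)ᵀ = (sqrtM A)⁻¹ := by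
  rw [transpose_nonsing_inv, transpose_sqrtM h]

lemma mul_inv_sqrtM (h : A.PosDef) : A * (sqrtM A)⁻¹ = sqrtM A := calc
  A * (sqrtM A)⁻¹ = sqrtM A * sqrtM A * (sqrtM A)⁻¹ := by rw [sqrtM_mul_sqrtM h.posSemidef]
  _ = sqrtM A := mul_nonsing_inv_cancel_right _ _ (isUnit_det_sqrtM h)

lemma inv_sqrtM_mul (h : A.PosDef) : (sqrtM A)⁻¹ * A = sqrtM A := calc
  (sqrtM A)⁻¹ * A = (sqrtM A)⁻¹ * (sqrtM A * sqrtM A) := by rw [sqrtM_mul_sqrtM h.posSemidef]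
  _ = sqrtM A := nonsing_inv_mul_cancel_left _ _ (isUnit_det_sqrtM h)

end SqrtM

section TraceInequalities

variable {l m k : Type*} [Fintype m] [Fintype k]

lemma trace_mul_transpose_self_nonneg (X : Matrix m k ℝ) : 0 ≤ (X * Xᵀ).trace := by
  simpa [conjTranspose_eq_transpose_of_trivial] using
    (posSemidef_self_mul_conjTranspose X).trace_nonneg

lemma two_mul_trace_mul_le {R : Matrix m m ℝ} (hR : Rᵀ = R) (X : Matrix m m ℝ) :
    2 * (X * R).trace ≤ (R * R).trace + (X * Xᵀ).trace := by
  have h := trace_mul_transpose_self_nonneg (X - R)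
  have hRX : (R * Xᵀ).trace = (X * R).trace := by
    rw [← trace_transpose, transpose_mul, transpose_transpose, hR]
  rw [transpose_sub, hR, sub_mul, mul_sub, mul_sub, trace_sub, trace_sub, trace_sub, hRX] at h
  linarith

lemma trace_mul_transpose_mul_mul_transpose_le [Fintype l] [DecidableEq l] [DecidableEq k]
    {Y : Matrix l k ℝ} (hY : Y * Yᵀ = 1) (Z : Matrix m k ℝ) :
    (Z * Yᵀ * Y * Zᵀ).trace ≤ (Z * Zᵀ).trace := by
  have hproj : (1 - Yᵀ * Y) * (1 - Yᵀ * Y)ᵀ = 1 - Yᵀ * Y := by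
    rw [transpose_sub, transpose_one, transpose_mul, transpose_transpose, sub_mul, mul_sub,
      mul_sub, Matrix.mul_assoc Yᵀ Y (Yᵀ * Y), ← Matrix.mul_assoc Y, hY]
    simp
  have h := trace_mul_transpose_self_nonneg (Z * (1 - Yᵀ * Y))
  rw [transpose_mul, Matrix.mul_assoc, ← Matrix.mul_assoc (1 - Yᵀ * Y), hproj, Matrix.sub_mul,
    Matrix.mul_sub, trace_sub, Matrix.one_mul, Matrix.mul_assoc Yᵀ, ← Matrix.mul_assoc Z,
    ← Matrix.mul_assoc (Z * Yᵀ)] at h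
  linarith

end TraceInequalities

section SqrtMTraceInequalities

variable {n : ℕ}

lemma trace_mul_transpose_le_trace_sqrtM {ι : Type*} [Fintype ι] [DecidableEq ι]
    {M Y : Matrix (Fin n) ι ℝ} (hM : (M * Mᵀ).PosDef) (hY : Y * Yᵀ = 1) :
    (M * Yᵀ).trace ≤ (sqrtM (M * Mᵀ)).trace := by
  set Q := sqrtM (M * Mᵀ)
  have hQ : Q.PosDef := posDef_sqrtM hM
  set R := sqrtM Q
  have hRu : IsUnit R.det := isUnit_det_sqrtM hQ
  have hRR : R * R = Q := sqrtM_mul_sqrtM hQ.posSemidef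
  have hQQ : Q * Q = M * Mᵀ := sqrtM_mul_sqrtM hM.posSemidef
  have hRt : Rᵀ = R := transpose_sqrtM hQ.posSemidef
  have hRit : (R⁻¹)ᵀ = R⁻¹ := transpose_inv_sqrtM hQ.posSemidef
  set X := R⁻¹ * (M * Yᵀ)
  have hXR : (X * R).trace = (M * Yᵀ).trace := by
    rw [trace_mul_comm, ← Matrix.mul_assoc, mul_nonsing_inv _ hRu, Matrix.one_mul]
  have hXX : (X * Xᵀ).trace ≤ Q.trace := calc
    (X * Xᵀ).trace = (R⁻¹ * M * Yᵀ * Y * (R⁻¹ * M)ᵀ).trace := by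
      simp only [X, transpose_mul, transpose_transpose, Matrix.mul_assoc]
    _ ≤ (R⁻¹ * M * (R⁻¹ * M)ᵀ).trace := trace_mul_transpose_mul_mul_transpose_le hY _
    _ = (R⁻¹ * (R * R * (R * R)) * R⁻¹).trace := by
      rw [transpose_mul, hRit, hRR, hQQ]
      simp only [Matrix.mul_assoc]
    _ = Q.trace := by
      rw [← hRR, Matrix.mul_assoc, Matrix.mul_assoc, mul_nonsing_inv_cancel_right _ _ hRu,
        ← Matrix.mul_assoc, nonsing_inv_mul_cancel_left _ _ hRu]
  have := two_mul_trace_mul_le hRt X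
  rw [hRR, hXR] at this
  linarith

lemma two_mul_trace_sqrtM_le {A B : Matrix (Fin n) (Fin n) ℝ} (hA : A.PosDef)
    (hB : B.PosSemidef) :
    2 * (sqrtM B).trace ≤ ((sqrtM A)⁻¹ * B).trace + (sqrtM A).trace := by
  set Q := sqrtM A
  have hQ : Q.PosDef := posDef_sqrtM hA
  set R := sqrtM Q
  have hRu : IsUnit R.det := isUnit_det_sqrtM hQ
  have hRR : R * R = Q := sqrtM_mul_sqrtM hQ.posSemidef
  have hRt : Rᵀ = R := transpose_sqrtM hQ.posSemidef
  set X := sqrtM B * R⁻¹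
  have hXR : (X * R).trace = (sqrtM B).trace := by
    rw [nonsing_inv_mul_cancel_right _ _ hRu]
  have hXX : (X * Xᵀ).trace = (Q⁻¹ * B).trace := by
    rw [transpose_mul, transpose_nonsing_inv, hRt, transpose_sqrtM hB, ← hRR, Matrix.mul_inv_rev,
      Matrix.mul_assoc, trace_mul_comm, Matrix.mul_assoc, Matrix.mul_assoc,
      sqrtM_mul_sqrtM hB, Matrix.mul_assoc]
  have := two_mul_trace_mul_le hRt X
  rw [hRR, hXR, hXX] at this
  linarith

end SqrtMTraceInequalities

section RankOneUpdate

variable {n : ℕ} {S : Matrix (Fin n) (Fin n) ℝ}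

lemma posDef_vecMulVec_self_add (hS : S.PosDef) (m : Fin n → ℝ) :
    (vecMulVec m m + S).PosDef :=
  hS.posSemidef_add (by simpa using posSemidef_vecMulVec_self_star m)

lemma fromCols_mul_transpose_fromCols (hS : S.PosSemidef) (w z : Fin n → ℝ) :
    fromCols (replicateCol Unit w) (sqrtM S) * (fromCols (replicateCol Unit z) (sqrtM S))ᵀ =
      vecMulVec w z + S := by
  rw [transpose_fromCols, fromCols_mul_fromRows, transpose_replicateCol, ← vecMulVec_eq,
    transpose_sqrtM hS, sqrtM_mul_sqrtM hS]

lemma trace_sqrtM_add_dotProduct_le (hS : S.PosDef) (z w : Fin n → ℝ) :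
    (sqrtM (vecMulVec z z + S)).trace + (w - z) ⬝ᵥ ((sqrtM (vecMulVec z z + S))⁻¹ *ᵥ z) ≤
      (sqrtM (vecMulVec w w + S)).trace := by
  have hA := posDef_vecMulVec_self_add hS z
  set P := (sqrtM (vecMulVec z z + S))⁻¹
  have hPt : Pᵀ = P := transpose_inv_sqrtM hA.posSemidef
  set N := fromCols (replicateCol Unit z) (sqrtM S)
  set M := fromCols (replicateCol Unit w) (sqrtM S)
  have hMM : M * Mᵀ = vecMulVec w w + S := fromCols_mul_transpose_fromCols hS.posSemidef w w
  have hMN : M * Nᵀ = vecMulVec z z + S + vecMulVec (w - z) z := by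
    rw [fromCols_mul_transpose_fromCols hS.posSemidef, sub_vecMulVec]
    abel
  have hY : P * N * (P * N)ᵀ = 1 := calc
    P * N * (P * N)ᵀ = P * (N * Nᵀ) * P := by simp only [transpose_mul, hPt, Matrix.mul_assoc]
    _ = 1 := by
      rw [fromCols_mul_transpose_fromCols hS.posSemidef, inv_sqrtM_mul hA,
        mul_nonsing_inv _ (isUnit_det_sqrtM hA)]
  have key := trace_mul_transpose_le_trace_sqrtM (hMM ▸ posDef_vecMulVec_self_add hS w) hY
  rwa [hMM, transpose_mul, hPt, ← Matrix.mul_assoc, hMN, Matrix.add_mul, trace_add,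
    mul_inv_sqrtM hA, vecMulVec_mul, trace_vecMulVec, ← mulVec_transpose, hPt] at key

lemma two_mul_trace_sqrtM_add_le (hS : S.PosDef) (m h : Fin n → ℝ) :
    2 * (sqrtM (vecMulVec (m + h) (m + h) + S)).trace ≤
      2 * (sqrtM (vecMulVec m m + S)).trace + 2 * (h ⬝ᵥ ((sqrtM (vecMulVec m m + S))⁻¹ *ᵥ m)) +
        h ⬝ᵥ ((sqrtM (vecMulVec m m + S))⁻¹ *ᵥ h) := by
  have hA := posDef_vecMulVec_self_add hS m
  set P := (sqrtM (vecMulVec m m + S))⁻¹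
  have hPt : Pᵀ = P := transpose_inv_sqrtM hA.posSemidef
  have hPmh : (P *ᵥ m) ⬝ᵥ h = h ⬝ᵥ (P *ᵥ m) := dotProduct_comm _ _
  have hPhm : (P *ᵥ h) ⬝ᵥ m = h ⬝ᵥ (P *ᵥ m) := by
    rw [dotProduct_mulVec, ← mulVec_transpose, hPt]
  have hPhh : (P *ᵥ h) ⬝ᵥ h = h ⬝ᵥ (P *ᵥ h) := dotProduct_comm _ _
  have htrace : (P * (vecMulVec (m + h) (m + h) + S)).trace =
      (sqrtM (vecMulVec m m + S)).trace + 2 * (h ⬝ᵥ (P *ᵥ m)) + h ⬝ᵥ (P *ᵥ h) := by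
    have hdecomp : vecMulVec (m + h) (m + h) + S =
        vecMulVec m m + S + vecMulVec m h + vecMulVec h m + vecMulVec h h := by
      simp only [add_vecMulVec, vecMulVec_add]
      abel
    rw [hdecomp, Matrix.mul_add, Matrix.mul_add, Matrix.mul_add, trace_add, trace_add, trace_add,
      inv_sqrtM_mul hA, mul_vecMulVec, mul_vecMulVec, mul_vecMulVec, trace_vecMulVec,
      trace_vecMulVec, trace_vecMulVec, hPmh, hPhm, hPhh]
    ring
  linarith [two_mul_trace_sqrtM_le hA (posDef_vecMulVec_self_add hS (m + h)).posSemidef]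

end RankOneUpdate

lemma convexOn_univ_of_forall_exists_subgradient {ι : Type*} [Fintype ι] {f : (ι → ℝ) → ℝ}
    (h : ∀ z, ∃ g, ∀ w, f z + (w - z) ⬝ᵥ g ≤ f w) : ConvexOn ℝ Set.univ f := by
  refine ⟨convex_univ, fun x _ y _ a b ha hb hab => ?_⟩
  set z := a • x + b • y
  obtain ⟨g, hg⟩ := h z
  have hx := mul_le_mul_of_nonneg_left (hg x) ha
  have hy := mul_le_mul_of_nonneg_left (hg y) hb
  have hcancel : a * ((x - z) ⬝ᵥ g) + b * ((y - z) ⬝ᵥ g) = 0 := by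
    have : a • (x - z) + b • (y - z) = (1 - (a + b)) • z := by module
    rw [← smul_eq_mul, ← smul_eq_mul, ← smul_dotProduct, ← smul_dotProduct, ← add_dotProduct,
      this, hab, sub_self, zero_smul, zero_dotProduct]
  have hz : f z = a * f z + b * f z := by rw [← add_mul, hab, one_mul]
  simp only [smul_eq_mul]
  linarith

open scoped RealInnerProductSpace in
lemma hasGradientAt_of_abs_sub_sub_inner_le {E : Type*} [NormedAddCommGroup E]
    [InnerProductSpace ℝ E] [CompleteSpace E] {f : E → ℝ} {g x : E} (C : ℝ)
    (h : ∀ v, |f (x + v) - f x - ⟪g, v⟫| ≤ C * ‖v‖ ^ 2) : HasGradientAt f g x := by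
  rw [hasGradientAt_iff_isLittleO_nhds_zero]
  refine (Asymptotics.IsBigO.of_bound C (Filter.Eventually.of_forall fun v => ?_)).trans_isLittleO
    (Asymptotics.isLittleO_norm_pow_id one_lt_two)
  simpa using h v

open scoped RealInnerProductSpace in
lemma dotProduct_mulVec_le_norm_mul_sq {ι : Type*} [Fintype ι] [DecidableEq ι]
    (P : Matrix ι ι ℝ) (v : EuclideanSpace ℝ ι) :
    v.ofLp ⬝ᵥ (P *ᵥ v.ofLp) ≤ ‖toEuclideanCLM (𝕜 := ℝ) P‖ * ‖v‖ ^ 2 := calc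
  v.ofLp ⬝ᵥ (P *ᵥ v.ofLp) = ⟪v, toEuclideanCLM (𝕜 := ℝ) P v⟫ :=
    (inner_toEuclideanCLM P v v).symm
  _ ≤ ‖v‖ * ‖toEuclideanCLM (𝕜 := ℝ) P v‖ := real_inner_le_norm _ _
  _ ≤ ‖v‖ * (‖toEuclideanCLM (𝕜 := ℝ) P‖ * ‖v‖) := by
    gcongr
    exact ContinuousLinearMap.le_opNorm _ _
  _ = ‖toEuclideanCLM (𝕜 := ℝ) P‖ * ‖v‖ ^ 2 := by ring

theorem leon_dual_gradient_and_convexity {n : ℕ} {S : Matrix (Fin n) (Fin n) ℝ}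
    (hS : S.PosDef) {η : ℝ} (hη : 0 < η) :
    ConvexOn ℝ Set.univ (fun m : Fin n → ℝ => η * (sqrtM (vecMulVec m m + S)).trace) ∧
    ∀ m : Fin n → ℝ,
      HasGradientAt
        (fun x : EuclideanSpace ℝ (Fin n) =>
          η * (sqrtM (vecMulVec ((WithLp.equiv 2 (Fin n → ℝ)) x)
            ((WithLp.equiv 2 (Fin n → ℝ)) x) + S)).trace)
        ((WithLp.equiv 2 (Fin n → ℝ)).symm
          (η • ((sqrtM (vecMulVec m m + S))⁻¹ *ᵥ m)))
        ((WithLp.equiv 2 (Fin n → ℝ)).symm m) := by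
  refine ⟨(convexOn_univ_of_forall_exists_subgradient fun z =>
    ⟨_, trace_sqrtM_add_dotProduct_le hS z⟩).smul hη.le, fun m => ?_⟩
  set P := (sqrtM (vecMulVec m m + S))⁻¹
  refine hasGradientAt_of_abs_sub_sub_inner_le (η * ‖toEuclideanCLM (𝕜 := ℝ) P‖ / 2)
    fun v => ?_
  have hlower := trace_sqrtM_add_dotProduct_le hS m (m + v.ofLp)
  rw [add_sub_cancel_left] at hlower
  have hupper := two_mul_trace_sqrtM_add_le hS m v.ofLp
  have hquad := dotProduct_mulVec_le_norm_mul_sq P v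
  simp only [WithLp.equiv_apply, WithLp.equiv_symm_apply, WithLp.ofLp_add,
    EuclideanSpace.inner_eq_star_dotProduct, star_trivial, dotProduct_smul, smul_eq_mul]
  rw [← mul_sub, ← mul_sub, abs_mul, abs_of_pos hη, mul_div_assoc, mul_assoc]
  gcongr
  rw [abs_le]
  constructor <;> linarith
end

section
/- Hölder-smooth Bregman lower bound on gradient differences: let f : ℝ^n → ℝ be convex and differentiable with ‖∇f(x) − ∇f(y)‖_* ≤ L ‖x − y‖^ν for all x, y (where ν ∈ (0, 1], L > 0, and ‖·‖, ‖·‖_* are a norm and its dual). Then for all x, y, ‖∇f(x) − ∇f(y)‖_*^{1 + 1/ν} ≤ ((1+ν)/ν) · L^{1/ν} · B_f(y; x), where B_f(y; x) = f(y) − f(x) − ⟨∇f(x), y − x⟩. -/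
/-!
Let `D` be the dual norm of `∇f(x) - ∇f(y)`. Convexity at `x` (first-order condition) and the
Hölder descent inequality `f(y + s) ≤ f(y) + ⟨∇f(y), s⟩ + L ‖s‖^(1+ν) / (1+ν)` at `y` combine, for
every step `s`, into `B_f(y; x) ≥ ⟨∇f(x) - ∇f(y), s⟩ - L ‖s‖^(1+ν) / (1+ν)`. Take `s = t u` with
`u` a unit vector attaining the dual norm (it exists since the unit ball of a norm on `ℝⁿ` is
compact) and optimise over `t`.
-/

open Matrix
open scoped Classical

namespace Seminorm

variable {E : Type*} [NormedAddCommGroup E] [NormedSpace ℝ E] [FiniteDimensional ℝ E]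
  (p : Seminorm ℝ E)

theorem continuous_of_finiteDimensional : Continuous p :=
  p.convexOn.locallyLipschitz.continuous

theorem exists_pos_mul_norm_le (hp : ∀ x, p x = 0 → x = 0) : ∃ m > 0, ∀ x, m * ‖x‖ ≤ p x := by
  rcases subsingleton_or_nontrivial E with hE | hE
  · exact ⟨1, one_pos, fun x => by simp [Subsingleton.elim x 0]⟩
  obtain ⟨u, hu, hmin⟩ := (isCompact_sphere (0 : E) 1).exists_isMinOn
    (NormedSpace.sphere_nonempty.mpr zero_le_one) p.continuous_of_finiteDimensional.continuousOn
  have hpu : 0 < p u := (apply_nonneg p u).lt_of_ne fun h => by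
    simp [hp u h.symm] at hu
  refine ⟨p u, hpu, fun x => ?_⟩
  rcases eq_or_ne x 0 with rfl | hx
  · simp
  have hx' : 0 < ‖x‖ := norm_pos_iff.mpr hx
  have := hmin (show ‖x‖⁻¹ • x ∈ Metric.sphere (0 : E) 1 by simp [norm_smul, hx'.ne'])
  rw [Set.mem_ofPred_eq, map_smul_eq_mul, norm_inv, norm_norm] at this
  rwa [le_inv_mul_iff₀ hx', mul_comm] at this

theorem isCompact_setOf_le_one (hp : ∀ x, p x = 0 → x = 0) : IsCompact {x | p x ≤ 1} := by
  obtain ⟨m, hm, hmp⟩ := p.exists_pos_mul_norm_le hp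
  refine Metric.isCompact_of_isClosed_isBounded
    (isClosed_le p.continuous_of_finiteDimensional continuous_const) ?_
  refine (Metric.isBounded_closedBall (x := 0) (r := 1 / m)).subset fun x hx => ?_
  rw [Metric.mem_closedBall, dist_zero_right, le_div_iff₀ hm, mul_comm]
  exact (hmp x).trans hx

end Seminorm

section DualNorm

variable {E : Type*} [NormedAddCommGroup E] [NormedSpace ℝ E]

noncomputable def dualNorm (p : Seminorm ℝ E) (φ : E →L[ℝ] ℝ) : ℝ :=
  ⨆ u : {u : E // p u ≤ 1}, φ u

variable [FiniteDimensional ℝ E] {p : Seminorm ℝ E} (hp : ∀ x, p x = 0 → x = 0) (φ : E →L[ℝ] ℝ)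
include hp

theorem bddAbove_range_dual : BddAbove (Set.range fun u : {u : E // p u ≤ 1} => φ u) := by
  refine ((p.isCompact_setOf_le_one hp).bddAbove_image φ.continuous.continuousOn).mono ?_
  rintro _ ⟨u, rfl⟩
  exact ⟨u, u.2, rfl⟩

theorem le_dualNorm {u : E} (hu : p u ≤ 1) : φ u ≤ dualNorm p φ :=
  le_ciSup (bddAbove_range_dual hp φ) ⟨u, hu⟩

theorem dualNorm_nonneg : 0 ≤ dualNorm p φ := by
  simpa using le_dualNorm hp φ (u := 0) (by simp)

theorem apply_le_dualNorm_mul (v : E) : φ v ≤ dualNorm p φ * p v := by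
  rcases (apply_nonneg p v).eq_or_lt with hv | hv
  · simp [hp v hv.symm]
  have := le_dualNorm hp φ (u := (p v)⁻¹ • v) (by
    rw [map_smul_eq_mul, norm_inv, Real.norm_of_nonneg hv.le, inv_mul_cancel₀ hv.ne'])
  rwa [map_smul, smul_eq_mul, inv_mul_le_iff₀ hv, mul_comm] at this

theorem exists_apply_eq_dualNorm : ∃ u, p u ≤ 1 ∧ φ u = dualNorm p φ := by
  obtain ⟨u, hu, hmax⟩ := (p.isCompact_setOf_le_one hp).exists_isMaxOn ⟨0, by simp⟩
    φ.continuous.continuousOn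
  have : Nonempty {u : E // p u ≤ 1} := ⟨⟨u, hu⟩⟩
  exact ⟨u, hu, le_antisymm (le_dualNorm hp φ hu) (ciSup_le fun v => hmax v.2)⟩

end DualNorm

section Calculus

variable {E : Type*} [NormedAddCommGroup E] [NormedSpace ℝ E]

theorem HasFDerivAt.hasDerivAt_add_smul {F : Type*} [NormedAddCommGroup F] [NormedSpace ℝ F]
    {f : E → F} {f' : E →L[ℝ] F} {y s : E} {t : ℝ} (hf : HasFDerivAt f f' (y + t • s)) :
    HasDerivAt (fun t : ℝ => f (y + t • s)) (f' s) t := by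
  have := hf.comp_hasDerivAt t (((hasDerivAt_id t).smul_const s).const_add y)
  simpa [Function.comp_def] using this

theorem ConvexOn.add_le_of_hasFDerivAt {f : E → ℝ} {f' : E →L[ℝ] ℝ} {x : E}
    (hconv : ConvexOn ℝ Set.univ f) (hf : HasFDerivAt f f' x) (z : E) :
    f x + f' (z - x) ≤ f z := by
  have hline : ConvexOn ℝ Set.univ fun t : ℝ => f (x + t • (z - x)) := by
    have hfun : f ∘ AffineMap.lineMap x z = fun t : ℝ => f (x + t • (z - x)) := by
      ext t
      simp [AffineMap.lineMap_apply_module', add_comm]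
    simpa [hfun] using hconv.comp_affineMap (AffineMap.lineMap x z)
  have hd : HasDerivAt (fun t : ℝ => f (x + t • (z - x))) (f' (z - x)) 0 :=
    HasFDerivAt.hasDerivAt_add_smul (by simpa using hf)
  have := hline.le_slope_of_hasDerivAt (Set.mem_univ 0) (Set.mem_univ 1) one_pos hd
  simp only [slope_def_field, one_smul, zero_smul, add_zero, sub_zero, div_one,
    add_sub_cancel] at this
  linarith

theorem le_add_add_div_of_hasDerivAt {h h' : ℝ → ℝ} {K ν : ℝ} (hν : 0 ≤ ν)
    (hd : ∀ t, HasDerivAt h (h' t) t) (hK : ∀ t ∈ Set.Ioo (0 : ℝ) 1, h' t - h' 0 ≤ K * t ^ ν) :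
    h 1 ≤ h 0 + h' 0 + K / (1 + ν) := by
  set g : ℝ → ℝ := fun t => h 0 + t * h' 0 + K / (1 + ν) * t ^ (1 + ν) - h t
  have hg : ∀ t, HasDerivAt g (h' 0 + K * t ^ ν - h' t) t := by
    intro t
    have := ((((hasDerivAt_id t).mul_const (h' 0)).const_add (h 0)).add
      ((Real.hasDerivAt_rpow_const (x := t) (p := 1 + ν) (Or.inr (by linarith))).const_mul
        (K / (1 + ν)))).sub (hd t)
    refine this.congr_deriv ?_
    rw [one_mul, add_sub_cancel_left]
    field_simp
  have hmono : MonotoneOn g (Set.Icc 0 1) :=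
    monotoneOn_of_hasDerivWithinAt_nonneg (convex_Icc 0 1)
      (fun t _ => (hg t).continuousAt.continuousWithinAt) (fun t _ => (hg t).hasDerivWithinAt)
      (fun t ht => by rw [interior_Icc] at ht; linarith [hK t ht])
  have := hmono (Set.left_mem_Icc.2 zero_le_one) (Set.right_mem_Icc.2 zero_le_one) zero_le_one
  simp [g, Real.zero_rpow (by linarith : (1 + ν) ≠ 0)] at this
  linarith

variable {p : Seminorm ℝ E} {f : E → ℝ} {f' : E → E →L[ℝ] ℝ} {ν L : ℝ}

theorem le_add_add_rpow_of_holder (hν : 0 ≤ ν) (hf : ∀ x, HasFDerivAt f (f' x) x)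
    (hholder : ∀ a b v, (f' a - f' b) v ≤ L * p (a - b) ^ ν * p v) (y s : E) :
    f (y + s) ≤ f y + f' y s + L / (1 + ν) * p s ^ (1 + ν) := by
  have := le_add_add_div_of_hasDerivAt (h := fun t : ℝ => f (y + t • s))
    (h' := fun t => f' (y + t • s) s) (K := L * p s ^ (1 + ν)) hν
    (fun t => (hf _).hasDerivAt_add_smul) fun t ht => by
      have hts := hholder (y + t • s) y s
      rw [add_sub_cancel_left, map_smul_eq_mul, Real.norm_of_nonneg ht.1.le,
        Real.mul_rpow ht.1.le (apply_nonneg p s)] at hts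
      rw [Real.rpow_add' (apply_nonneg p s) (by linarith), Real.rpow_one]
      simpa [mul_comm, mul_left_comm, mul_assoc] using hts
  simpa [mul_div_right_comm] using this

theorem sub_le_bregman (hν : 0 ≤ ν) (hconv : ConvexOn ℝ Set.univ f)
    (hf : ∀ x, HasFDerivAt f (f' x) x)
    (hholder : ∀ a b v, (f' a - f' b) v ≤ L * p (a - b) ^ ν * p v) (x y s : E) :
    (f' x - f' y) s - L / (1 + ν) * p s ^ (1 + ν) ≤ f y - f x - f' x (y - x) := by
  have hfirst := hconv.add_le_of_hasFDerivAt (hf x) (y + s)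
  have hdescent := le_add_add_rpow_of_holder hν hf hholder y s
  rw [add_sub_right_comm, map_add] at hfirst
  rw [_root_.sub_apply]
  linarith

end Calculus

/-- `t D - L t ^ (1 + ν) / (1 + ν)` at its maximiser `t = (D / L) ^ (1 / ν)`. -/
theorem mul_sub_div_mul_rpow_eq {D L ν : ℝ} (hD : 0 ≤ D) (hL : 0 < L) (hν : 0 < ν) :
    (1 + ν) / ν * L ^ (1 / ν) *
      ((D / L) ^ (1 / ν) * D - L / (1 + ν) * ((D / L) ^ (1 / ν)) ^ (1 + ν)) = D ^ (1 + 1 / ν) := by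
  have hDL : 0 ≤ D / L := div_nonneg hD hL.le
  have hpow : ((D / L) ^ (1 / ν)) ^ (1 + ν) = (D / L) ^ (1 / ν) * (D / L) := by
    rw [← Real.rpow_mul hDL, mul_add, mul_one, one_div_mul_cancel hν.ne',
      Real.rpow_add' hDL (by positivity), Real.rpow_one]
  rw [hpow, Real.div_rpow hD hL.le, add_comm, Real.rpow_add' hD (by positivity), Real.rpow_one]
  have : 0 < L ^ (1 / ν) := by positivity
  field_simp
  ring

theorem rpow_dualNorm_le_bregman {E : Type*} [NormedAddCommGroup E] [NormedSpace ℝ E]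
    [FiniteDimensional ℝ E] {p : Seminorm ℝ E} (hp : ∀ x, p x = 0 → x = 0) {f : E → ℝ}
    {f' : E → E →L[ℝ] ℝ} {ν L : ℝ} (hν : 0 < ν) (hL : 0 < L) (hconv : ConvexOn ℝ Set.univ f)
    (hf : ∀ x, HasFDerivAt f (f' x) x)
    (hholder : ∀ x y, dualNorm p (f' x - f' y) ≤ L * p (x - y) ^ ν) (x y : E) :
    dualNorm p (f' x - f' y) ^ (1 + 1 / ν) ≤
      (1 + ν) / ν * L ^ (1 / ν) * (f y - f x - f' x (y - x)) := by
  have hpair : ∀ a b v, (f' a - f' b) v ≤ L * p (a - b) ^ ν * p v := fun a b v =>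
    (apply_le_dualNorm_mul hp _ v).trans
      (mul_le_mul_of_nonneg_right (hholder a b) (apply_nonneg p v))
  set D := dualNorm p (f' x - f' y)
  obtain ⟨u, hu, huD⟩ := exists_apply_eq_dualNorm hp (f' x - f' y)
  set t := (D / L) ^ (1 / ν)
  have ht : 0 ≤ t := Real.rpow_nonneg (div_nonneg (dualNorm_nonneg hp _) hL.le) _
  have hstep : t * D - L / (1 + ν) * t ^ (1 + ν) ≤ f y - f x - f' x (y - x) := by
    have hpt : p (t • u) ^ (1 + ν) ≤ t ^ (1 + ν) := by
      refine Real.rpow_le_rpow (apply_nonneg p _) ?_ (by positivity)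
      rw [map_smul_eq_mul, Real.norm_of_nonneg ht]
      exact mul_le_of_le_one_right ht hu
    have := sub_le_bregman hν.le hconv hf hpair x y (t • u)
    rw [map_smul, smul_eq_mul, huD] at this
    linarith [mul_le_mul_of_nonneg_left hpt (by positivity : 0 ≤ L / (1 + ν))]
  calc D ^ (1 + 1 / ν)
      = (1 + ν) / ν * L ^ (1 / ν) * (t * D - L / (1 + ν) * t ^ (1 + ν)) :=
        (mul_sub_div_mul_rpow_eq (dualNorm_nonneg hp _) hL hν).symm
    _ ≤ (1 + ν) / ν * L ^ (1 / ν) * (f y - f x - f' x (y - x)) := by gcongr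

theorem hasFDerivAt_dotProduct_of_hasGradientAt {n : ℕ} {f : (Fin n → ℝ) → ℝ} {g x : Fin n → ℝ}
    (h : HasGradientAt (fun z : EuclideanSpace ℝ (Fin n) => f ((WithLp.equiv 2 (Fin n → ℝ)) z))
      ((WithLp.equiv 2 (Fin n → ℝ)).symm g) ((WithLp.equiv 2 (Fin n → ℝ)).symm x)) :
    HasFDerivAt f (LinearMap.toContinuousLinearMap (dotProductBilin ℝ ℝ g)) x := by
  have := (hasGradientAt_iff_hasFDerivAt.mp h).comp x
    (EuclideanSpace.equiv (Fin n) ℝ).symm.hasFDerivAt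
  refine this.congr_fderiv ?_
  ext v
  simp [PiLp.inner_apply, dotProduct, mul_comm]

theorem holder_bregman_lower_bound_general {n : ℕ} {ν L : ℝ} (hν : 0 < ν)
    (hL : 0 < L) (N : (Fin n → ℝ) → ℝ)
    (hN0 : ∀ x, N x = 0 ↔ x = 0) (hNs : ∀ (c : ℝ) x, N (c • x) = |c| * N x)
    (hNt : ∀ x y, N (x + y) ≤ N x + N y)
    (f : (Fin n → ℝ) → ℝ) (f' : (Fin n → ℝ) → (Fin n → ℝ))
    (hconv : ConvexOn ℝ Set.univ f)
    (hgrad : ∀ x, HasGradientAt (fun z : EuclideanSpace ℝ (Fin n) => f ((WithLp.equiv 2 (Fin n → ℝ)) z))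
      ((WithLp.equiv 2 (Fin n → ℝ)).symm (f' x)) ((WithLp.equiv 2 (Fin n → ℝ)).symm x))
    (hholder : ∀ x y,
      (⨆ u : {u : Fin n → ℝ // N u ≤ 1}, (f' x - f' y) ⬝ᵥ u.1) ≤ L * N (x - y) ^ ν) :
    ∀ x y,
      (⨆ u : {u : Fin n → ℝ // N u ≤ 1}, (f' x - f' y) ⬝ᵥ u.1) ^ (1 + 1 / ν)
        ≤ (1 + ν) / ν * L ^ (1 / ν) * (f y - f x - f' x ⬝ᵥ (y - x)) := by
  let p : Seminorm ℝ (Fin n → ℝ) := Seminorm.of N hNt fun c x => by rw [hNs, Real.norm_eq_abs]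
  let Df : (Fin n → ℝ) →ₗ[ℝ] (Fin n → ℝ) →L[ℝ] ℝ :=
    LinearMap.toContinuousLinearMap.toLinearMap ∘ₗ dotProductBilin ℝ ℝ
  have hdual : ∀ x y, dualNorm p (Df (f' x) - Df (f' y)) =
      ⨆ u : {u : Fin n → ℝ // N u ≤ 1}, (f' x - f' y) ⬝ᵥ u.1 := fun x y => by
    rw [← map_sub]; rfl
  intro x y
  rw [← hdual]
  exact rpow_dualNorm_le_bregman (fun x => (hN0 x).mp) hν hL hconv
    (fun x => hasFDerivAt_dotProduct_of_hasGradientAt (hgrad x))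
    (fun x y => (hdual x y).trans_le (hholder x y)) x y

theorem holder_bregman_lower_bound {n : ℕ} {ν L : ℝ} (hν : 0 < ν) (hν1 : ν ≤ 1)
    (hL : 0 < L) (N : (Fin n → ℝ) → ℝ)
    (hN0 : ∀ x, N x = 0 ↔ x = 0) (hNs : ∀ (c : ℝ) x, N (c • x) = |c| * N x)
    (hNt : ∀ x y, N (x + y) ≤ N x + N y)
    (f : (Fin n → ℝ) → ℝ) (f' : (Fin n → ℝ) → (Fin n → ℝ))
    (hconv : ConvexOn ℝ Set.univ f)
    (hgrad : ∀ x, HasGradientAt (fun z : EuclideanSpace ℝ (Fin n) => f ((WithLp.equiv 2 (Fin n → ℝ)) z))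
      ((WithLp.equiv 2 (Fin n → ℝ)).symm (f' x)) ((WithLp.equiv 2 (Fin n → ℝ)).symm x))
    (hholder : ∀ x y,
      (⨆ u : {u : Fin n → ℝ // N u ≤ 1}, (f' x - f' y) ⬝ᵥ u.1) ≤ L * N (x - y) ^ ν) :
    ∀ x y,
      (⨆ u : {u : Fin n → ℝ // N u ≤ 1}, (f' x - f' y) ⬝ᵥ u.1) ^ (1 + 1 / ν)
        ≤ (1 + ν) / ν * L ^ (1 / ν) * (f y - f x - f' x ⬝ᵥ (y - x)) :=
  holder_bregman_lower_bound_general hν hL N hN0 hNs hNt f f' hconv hgrad hholder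
end
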